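/- arXiv:hep-th/9509035 — 2 statements merged into one kernel-verified Lean document; each statement's English description precedes it below -/
import Mathlib

section
/- Represent a superfield on ℝ^D by a quadruple F = (f, f₊, f₋, f₊₋) of smooth real functions on ℝ^D (the components of f + f₊Θ⁺ + f₋Θ⁻ + f₊₋Θ⁺Θ⁻). Let ∂_μ (μ = 1,…,D) act componentwise, and define the odd derivatives ∂₊F := (f₊, 0, f₊₋, 0) and ∂₋F := (f₋, −f₊₋, 0, 0), and the constant superfields Θ⁺ := (0,1,0,0), Θ⁻ := (0,0,1,0). Suppose superfields B_μ (μ = 1,…,D), B₊, B₋ satisfy: ∂_μ B_ν − ∂_ν B_μ = 0 for all μ,ν; ∂_μ B_± − ∂_± B_μ = 0 for all μ; and ∂₊B₋ + ∂₋B₊ = 0. Then there exist a superfield A′ and real constants a₊₊, a₋₋ such that B_μ = ∂_μ A′ for all μ, B₊ = ∂₊A′ + a₊₊ Θ⁺, and B₋ = ∂₋A′ + a₋₋ Θ⁻. -/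
noncomputable section

/-- A superfield on `ℝ^D`, encoded by its four components `(f, f₊, f₋, f₊₋)`
(the components of `f + f₊Θ⁺ + f₋Θ⁻ + f₊₋Θ⁺Θ⁻`), indexed by `Fin 4` as
`0 ↦ f`, `1 ↦ f₊`, `2 ↦ f₋`, `3 ↦ f₊₋`. -/
abbrev SF (D : ℕ) := Fin 4 → (Fin D → ℝ) → ℝ

/-- Partial derivative in the `μ`-th coordinate direction. -/
def pdC {D : ℕ} (μ : Fin D) (f : (Fin D → ℝ) → ℝ) (x : Fin D → ℝ) : ℝ :=
  fderiv ℝ f x (Pi.single μ 1)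

/-- The even derivative `∂_μ`, acting componentwise. -/
def pdSF {D : ℕ} (μ : Fin D) (F : SF D) : SF D := fun k x => pdC μ (F k) x

/-- The odd derivative `∂₊F = (f₊, 0, f₊₋, 0)`. -/
def dPlus {D : ℕ} (F : SF D) : SF D := ![F 1, 0, F 3, 0]

/-- The odd derivative `∂₋F = (f₋, −f₊₋, 0, 0)`. -/
def dMinus {D : ℕ} (F : SF D) : SF D := ![F 2, -(F 3), 0, 0]

/-- The constant superfield `Θ⁺ = (0,1,0,0)`. -/
def ThetaP {D : ℕ} : SF D := ![0, 1, 0, 0]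

/-- The constant superfield `Θ⁻ = (0,0,1,0)`. -/
def ThetaM {D : ℕ} : SF D := ![0, 0, 1, 0]

/-- A superfield all of whose components are smooth. -/
def SmoothSF {D : ℕ} (F : SF D) : Prop := ∀ k, ContDiff ℝ (⊤ : ℕ∞) (F k)

/-!
Read componentwise, the hypotheses say: the lowest components `b_μ` of the `B_μ` form a closed
one-form on `ℝ^D`, so `b_μ = ∂_μ f` for a smooth `f` (Poincaré lemma); `∂_μ B_± = ∂_± B_μ` makes
the `Θ⁺`-component of `B₊` and the `Θ⁻`-component of `B₋` constant (these are `a₊₊`, `a₋₋`) and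
writes the remaining components of `B_μ` as `∂_μ` of components of `B_±`; and
`∂₊B₋ + ∂₋B₊ = 0` kills the top components of `B_±` and makes the `Θ⁺`-component of `B₋` minus
the `Θ⁻`-component of `B₊`. Hence `A′ = (f, B₊⁰, B₋⁰, B₊⁻)` works, where `B⁰` and `B⁻` denote
lowest and `Θ⁻`-components.
-/

section

variable {D : ℕ}

theorem ContinuousLinearMap.pi_ext_one {M : Type*} [AddCommMonoid M] [Module ℝ M]
    [TopologicalSpace M] {φ ψ : (Fin D → ℝ) →L[ℝ] M}
    (h : ∀ μ, φ (Pi.single μ 1) = ψ (Pi.single μ 1)) : φ = ψ :=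
  ContinuousLinearMap.coe_injective <| (Pi.basisFun ℝ (Fin D)).ext fun μ => by simpa using h μ

theorem eq_of_pdC_eq_zero {f : (Fin D → ℝ) → ℝ} (hf : Differentiable ℝ f)
    (h : ∀ μ, pdC μ f = 0) (x y : Fin D → ℝ) : f x = f y :=
  is_const_of_fderiv_eq_zero hf (fun z => ContinuousLinearMap.pi_ext_one fun μ => by
    simpa [pdC] using congrFun (h μ) z) x y

def coordOneForm (g : Fin D → (Fin D → ℝ) → ℝ) (x : Fin D → ℝ) : (Fin D → ℝ) →L[ℝ] ℝ :=
  ∑ ν, g ν x • (ContinuousLinearMap.proj ν : (Fin D → ℝ) →L[ℝ] ℝ)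

theorem coordOneForm_apply (g : Fin D → (Fin D → ℝ) → ℝ) (x v : Fin D → ℝ) :
    coordOneForm g x v = ∑ ν, g ν x * v ν := by
  simp [coordOneForm]

theorem coordOneForm_single (g : Fin D → (Fin D → ℝ) → ℝ) (x : Fin D → ℝ) (μ : Fin D) :
    coordOneForm g x (Pi.single μ 1) = g μ x := by
  simp [coordOneForm_apply, Pi.single_apply]

theorem hasFDerivAt_coordOneForm {g : Fin D → (Fin D → ℝ) → ℝ}
    (hg : ∀ ν, Differentiable ℝ (g ν)) (x : Fin D → ℝ) :
    HasFDerivAt (coordOneForm g)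
      (∑ ν, (fderiv ℝ (g ν) x).smulRight (ContinuousLinearMap.proj ν : (Fin D → ℝ) →L[ℝ] ℝ))
      x := by
  unfold coordOneForm
  exact HasFDerivAt.fun_sum fun ν _ =>
    (hg ν x).hasFDerivAt.smul_const (ContinuousLinearMap.proj ν : (Fin D → ℝ) →L[ℝ] ℝ)

theorem fderiv_coordOneForm_single {g : Fin D → (Fin D → ℝ) → ℝ}
    (hg : ∀ ν, Differentiable ℝ (g ν)) (x : Fin D → ℝ) (μ ν : Fin D) :
    fderiv ℝ (coordOneForm g) x (Pi.single μ 1) (Pi.single ν 1) = pdC μ (g ν) x := by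
  simp [(hasFDerivAt_coordOneForm hg x).fderiv, pdC, Pi.single_apply]

theorem contDiff_coordOneForm {n : WithTop ℕ∞} {g : Fin D → (Fin D → ℝ) → ℝ}
    (hg : ∀ ν, ContDiff ℝ n (g ν)) : ContDiff ℝ n (coordOneForm g) := by
  unfold coordOneForm
  exact ContDiff.sum fun ν _ => (hg ν).smul contDiff_const

theorem exists_contDiff_pdC_eq {n : ℕ∞} (hn : n ≠ 0) {g : Fin D → (Fin D → ℝ) → ℝ}
    (hg : ∀ μ, ContDiff ℝ n (g μ)) (hcl : ∀ μ ν, pdC μ (g ν) = pdC ν (g μ)) :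
    ∃ f, ContDiff ℝ (n + 1 : ℕ∞) f ∧ ∀ μ, pdC μ f = g μ := by
  have hn' : (n : WithTop ℕ∞) ≠ 0 := by exact_mod_cast hn
  have hgd : ∀ μ, Differentiable ℝ (g μ) := fun μ => (hg μ).differentiable hn'
  have hsymm : ∀ x v w, fderiv ℝ (coordOneForm g) x v w = fderiv ℝ (coordOneForm g) x w v := by
    intro x
    suffices fderiv ℝ (coordOneForm g) x = (fderiv ℝ (coordOneForm g) x).flip from
      fun v w => DFunLike.congr_fun (DFunLike.congr_fun this v) w
    refine ContinuousLinearMap.pi_ext_one fun μ => ?_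
    refine ContinuousLinearMap.pi_ext_one fun ν => ?_
    simp only [ContinuousLinearMap.flip_apply, fderiv_coordOneForm_single hgd, hcl]
  obtain ⟨f, hf⟩ := convex_univ.exists_forall_hasFDerivAt_of_fderiv_symmetric isOpen_univ
    ((contDiff_coordOneForm hg).differentiable hn').differentiableOn fun x _ => hsymm x
  have hdf : fderiv ℝ f = coordOneForm g := funext fun x => (hf x trivial).fderiv
  refine ⟨f, ?_, fun μ => funext fun x => by rw [pdC, hdf, coordOneForm_single]⟩
  push_cast
  rw [contDiff_succ_iff_fderiv]
  exact ⟨fun x => (hf x trivial).differentiableAt, by simp, hdf ▸ contDiff_coordOneForm hg⟩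

@[simp]
theorem pdSF_apply (μ : Fin D) (F : SF D) (k : Fin 4) : pdSF μ F k = pdC μ (F k) := rfl

theorem SF.ext {F G : SF D} (h0 : F 0 = G 0) (h1 : F 1 = G 1) (h2 : F 2 = G 2) (h3 : F 3 = G 3) :
    F = G :=
  funext fun k => by fin_cases k <;> assumption

end

/-- Super-Poincaré lemma for almost closed super-one-forms: a super-one-form
`(B_μ, B₊, B₋)` which is closed in all components except `(++)` and `(−−)` is of the form
`B_μ = ∂_μA′`, `B₊ = ∂₊A′ + a₊₊Θ⁺`, `B₋ = ∂₋A′ + a₋₋Θ⁻`. -/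
theorem stmt5 {D : ℕ} (Bv : Fin D → SF D) (Bp Bm : SF D)
    (hBv : ∀ μ, SmoothSF (Bv μ)) (hBp : SmoothSF Bp) (hBm : SmoothSF Bm)
    (h1 : ∀ μ ν, pdSF μ (Bv ν) - pdSF ν (Bv μ) = 0)
    (h2p : ∀ μ, pdSF μ Bp - dPlus (Bv μ) = 0)
    (h2m : ∀ μ, pdSF μ Bm - dMinus (Bv μ) = 0)
    (h3 : dPlus Bm + dMinus Bp = 0) :
    ∃ (A' : SF D) (app amm : ℝ), SmoothSF A' ∧
      (∀ μ, Bv μ = pdSF μ A') ∧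
      Bp = dPlus A' + app • ThetaP ∧
      Bm = dMinus A' + amm • ThetaM := by
  simp only [sub_eq_zero] at h1 h2p h2m
  obtain ⟨f, hf, hdf⟩ := exists_contDiff_pdC_eq (n := ⊤) (by simp) (fun μ => hBv μ 0)
    fun μ ν => congrFun (h1 μ ν) 0
  have hBp0 μ : pdC μ (Bp 0) = Bv μ 1 := by simpa [dPlus] using congrFun (h2p μ) 0
  have hBp1 x : Bp 1 x = Bp 1 0 := eq_of_pdC_eq_zero ((hBp 1).differentiable (by simp))
    (fun μ => by simpa [dPlus] using congrFun (h2p μ) 1) x 0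
  have hBp2 μ : pdC μ (Bp 2) = Bv μ 3 := by simpa [dPlus] using congrFun (h2p μ) 2
  have hBm0 μ : pdC μ (Bm 0) = Bv μ 2 := by simpa [dMinus] using congrFun (h2m μ) 0
  have hBm2 x : Bm 2 x = Bm 2 0 := eq_of_pdC_eq_zero ((hBm 2).differentiable (by simp))
    (fun μ => by simpa [dMinus] using congrFun (h2m μ) 2) x 0
  have hBm1 : Bm 1 = -Bp 2 := by
    simpa [dPlus, dMinus, add_eq_zero_iff_eq_neg] using congrFun h3 0
  have hBp3 : Bp 3 = 0 := by simpa [dPlus, dMinus] using congrFun h3 1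
  have hBm3 : Bm 3 = 0 := by simpa [dPlus, dMinus] using congrFun h3 2
  refine ⟨![f, Bp 0, Bm 0, Bp 2], Bp 1 0, Bm 2 0, ?_, fun μ => ?_, ?_, ?_⟩
  · intro k
    fin_cases k
    exacts [by simpa using hf, hBp 0, hBm 0, hBp 2]
  · exact SF.ext (hdf μ).symm (hBp0 μ).symm (hBm0 μ).symm (hBp2 μ).symm
  · refine SF.ext ?_ (funext fun _ => ?_) ?_ ?_ <;> simp [dPlus, ThetaP, hBp1, hBp3]
  · refine SF.ext ?_ ?_ (funext fun _ => ?_) ?_ <;> simp [dMinus, ThetaM, hBm1, hBm2, hBm3]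
end
end

section
/- If (ζ, b) and (ξ, c) are Killing pairs on ℝ^D, then (η, e) is also a Killing pair, where η^μ := ζ^ν ∂_ν ξ^μ − ξ^ν ∂_ν ζ^μ is the Lie bracket of ζ and ξ, and e_μ := (ℒ_ζ c)_μ − (ℒ_ξ b)_μ − H_{μνρ} ζ^ν ξ^ρ, with the Lie derivative of a covector defined by (ℒ_ζ c)_μ := ζ^ρ ∂_ρ c_μ + ∂_μ ζ^ρ · c_ρ. -/
noncomputable section

/-- Partial derivative of `f` at `x` in the `μ`-th coordinate direction. -/
def pd {D : ℕ} (μ : Fin D) (f : (Fin D → ℝ) → ℝ) (x : Fin D → ℝ) : ℝ :=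
  fderiv ℝ f x (Pi.single μ 1)

/-- A smooth real-valued function. -/
def Sm {D : ℕ} (f : (Fin D → ℝ) → ℝ) : Prop := ContDiff ℝ (⊤ : ℕ∞) f

/-- A smooth vector field on `ℝ^D`. -/
def SmoothVF {D : ℕ} (V : (Fin D → ℝ) → Fin D → ℝ) : Prop := ∀ μ, Sm fun x => V x μ

/-- A smooth field of 2-tensors on `ℝ^D`. -/
def Smooth2T {D : ℕ} (T : (Fin D → ℝ) → Fin D → Fin D → ℝ) : Prop :=
  ∀ μ ν, Sm fun x => T x μ ν

/-- The connection coefficients `Γ_{μν,ρ} = ½(∂_μG_{νρ} + ∂_νG_{μρ} − ∂_ρG_{μν})`. -/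
def Gam {D : ℕ} (G : (Fin D → ℝ) → Fin D → Fin D → ℝ) (μ ν ρ : Fin D) (x : Fin D → ℝ) : ℝ :=
  (pd μ (fun y => G y ν ρ) x + pd ν (fun y => G y μ ρ) x - pd ρ (fun y => G y μ ν) x) / 2

/-- The torsion `H_{μνρ} = ∂_μB_{νρ} + ∂_νB_{ρμ} + ∂_ρB_{μν}`. -/
def Htor {D : ℕ} (B : (Fin D → ℝ) → Fin D → Fin D → ℝ) (μ ν ρ : Fin D) (x : Fin D → ℝ) : ℝ :=
  pd μ (fun y => B y ν ρ) x + pd ν (fun y => B y ρ μ) x + pd ρ (fun y => B y μ ν) x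

/-- `Γ⁺_{μν,ρ} = Γ_{μν,ρ} + ½H_{μνρ}`. -/
def GamP {D : ℕ} (G B : (Fin D → ℝ) → Fin D → Fin D → ℝ) (μ ν ρ : Fin D) (x : Fin D → ℝ) : ℝ :=
  Gam G μ ν ρ x + Htor B μ ν ρ x / 2

/-- `Γ⁻_{μν,ρ} = Γ_{μν,ρ} − ½H_{μνρ}`. -/
def GamM {D : ℕ} (G B : (Fin D → ℝ) → Fin D → Fin D → ℝ) (μ ν ρ : Fin D) (x : Fin D → ℝ) : ℝ :=
  Gam G μ ν ρ x - Htor B μ ν ρ x / 2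

/-- The lowered components `V_μ = G_{μν}V^ν` of a vector field. -/
def lowerV {D : ℕ} (G : (Fin D → ℝ) → Fin D → Fin D → ℝ)
    (V : (Fin D → ℝ) → Fin D → ℝ) (μ : Fin D) (x : Fin D → ℝ) : ℝ :=
  ∑ ν, G x μ ν * V x ν

/-- The covariant derivative `D⁺_μV_ν = G_{νρ}∂_μV^ρ + Γ⁺_{μρ,ν}V^ρ`. -/
def Dp {D : ℕ} (G B : (Fin D → ℝ) → Fin D → Fin D → ℝ)
    (V : (Fin D → ℝ) → Fin D → ℝ) (μ ν : Fin D) (x : Fin D → ℝ) : ℝ :=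
  (∑ ρ, G x ν ρ * pd μ (fun y => V y ρ) x) + ∑ ρ, GamP G B μ ρ ν x * V x ρ

/-- The covariant derivative `D⁻_μV_ν = G_{νρ}∂_μV^ρ + Γ⁻_{μρ,ν}V^ρ`. -/
def Dm {D : ℕ} (G B : (Fin D → ℝ) → Fin D → Fin D → ℝ)
    (V : (Fin D → ℝ) → Fin D → ℝ) (μ ν : Fin D) (x : Fin D → ℝ) : ℝ :=
  (∑ ρ, G x ν ρ * pd μ (fun y => V y ρ) x) + ∑ ρ, GamM G B μ ρ ν x * V x ρ

/-- The Lie derivative of the metric: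
`(ℒ_ζG)_{μν} = ζ^ρ∂_ρG_{μν} + ∂_μζ^ρ·G_{ρν} + ∂_νζ^ρ·G_{μρ}`. -/
def lieG {D : ℕ} (G : (Fin D → ℝ) → Fin D → Fin D → ℝ)
    (ζ : (Fin D → ℝ) → Fin D → ℝ) (μ ν : Fin D) (x : Fin D → ℝ) : ℝ :=
  (∑ ρ, ζ x ρ * pd ρ (fun y => G y μ ν) x)
    + (∑ ρ, pd μ (fun y => ζ y ρ) x * G x ρ ν)
    + ∑ ρ, pd ν (fun y => ζ y ρ) x * G x μ ρ

/-- A Killing pair `(ζ, b)`: `D⁻_μζ_ν + D⁺_νζ_μ + ∂_μb_ν − ∂_νb_μ = 0`. -/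
def IsKillingPair {D : ℕ} (G B : (Fin D → ℝ) → Fin D → Fin D → ℝ)
    (ζ b : (Fin D → ℝ) → Fin D → ℝ) : Prop :=
  ∀ (μ ν : Fin D) (x : Fin D → ℝ),
    Dm G B ζ μ ν x + Dp G B ζ ν μ x
      + pd μ (fun y => b y ν) x - pd ν (fun y => b y μ) x = 0

/-! Since `D⁻_μζ_ν + D⁺_νζ_μ = (ℒ_ζ G)_{μν} + H_{μνρ}ζ^ρ`, a pair `(ζ, b)` is a Killing pair
exactly when the tensor `K(ζ, b) = ℒ_ζ G + ι_ζ H + db` vanishes. For the bracket pair,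
`K(η, e) = ℒ_ζ K(ξ, c) − ℒ_ξ K(ζ, b)` term by term: `ℒ_η = [ℒ_ζ, ℒ_ξ]` on `G`, `d` commutes with
`ℒ`, and, `H = dB` being closed, Cartan calculus gives
`ι_η H = ℒ_ζ ι_ξ H − ℒ_ξ ι_ζ H + d(ι_ζ ι_ξ H)`, whose last term is cancelled by the `H`-term
of `e`. -/

variable {D : ℕ}

section Calculus

attribute [fun_prop] Sm

@[fun_prop]
lemma Sm.add {f g : (Fin D → ℝ) → ℝ} (hf : Sm f) (hg : Sm g) : Sm fun x => f x + g x :=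
  ContDiff.add hf hg

@[fun_prop]
lemma Sm.sub {f g : (Fin D → ℝ) → ℝ} (hf : Sm f) (hg : Sm g) : Sm fun x => f x - g x :=
  ContDiff.sub hf hg

@[fun_prop]
lemma Sm.neg {f : (Fin D → ℝ) → ℝ} (hf : Sm f) : Sm fun x => -f x :=
  ContDiff.neg hf

@[fun_prop]
lemma Sm.mul {f g : (Fin D → ℝ) → ℝ} (hf : Sm f) (hg : Sm g) : Sm fun x => f x * g x :=
  ContDiff.mul hf hg

@[fun_prop]
lemma Sm.sum {ι : Type*} (s : Finset ι) {f : ι → (Fin D → ℝ) → ℝ} (hf : ∀ i ∈ s, Sm (f i)) :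
    Sm fun x => ∑ i ∈ s, f i x :=
  ContDiff.sum hf

lemma Sm.differentiable {f : (Fin D → ℝ) → ℝ} (hf : Sm f) : Differentiable ℝ f :=
  ContDiff.differentiable hf (by simp)

lemma Sm.contDiff_fderiv {f : (Fin D → ℝ) → ℝ} (hf : Sm f) :
    ContDiff ℝ (⊤ : ℕ∞) (fderiv ℝ f) :=
  hf.fderiv_right (m := (⊤ : ℕ∞)) (le_of_eq ENat.coe_top_add_one)

@[fun_prop]
lemma Sm.pd {f : (Fin D → ℝ) → ℝ} (hf : Sm f) (μ : Fin D) : Sm fun x => pd μ f x :=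
  hf.contDiff_fderiv.clm_apply contDiff_const

lemma pd_add {f g : (Fin D → ℝ) → ℝ} (hf : Sm f) (hg : Sm g) (μ : Fin D) (x : Fin D → ℝ) :
    pd μ (fun y => f y + g y) x = pd μ f x + pd μ g x := by
  simp only [pd, fderiv_fun_add (hf.differentiable x) (hg.differentiable x), add_apply]

lemma pd_sub {f g : (Fin D → ℝ) → ℝ} (hf : Sm f) (hg : Sm g) (μ : Fin D) (x : Fin D → ℝ) :
    pd μ (fun y => f y - g y) x = pd μ f x - pd μ g x := by
  simp only [pd, fderiv_fun_sub (hf.differentiable x) (hg.differentiable x), sub_apply]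

lemma pd_neg (f : (Fin D → ℝ) → ℝ) (μ : Fin D) (x : Fin D → ℝ) :
    pd μ (fun y => -f y) x = -pd μ f x := by
  simp only [pd, fderiv_fun_neg, neg_apply]

lemma pd_mul {f g : (Fin D → ℝ) → ℝ} (hf : Sm f) (hg : Sm g) (μ : Fin D) (x : Fin D → ℝ) :
    pd μ (fun y => f y * g y) x = pd μ f x * g x + f x * pd μ g x := by
  simp only [pd, fderiv_fun_mul (hf.differentiable x) (hg.differentiable x),
    add_apply, smul_apply, smul_eq_mul]
  ring

lemma pd_sum {ι : Type*} (s : Finset ι) {f : ι → (Fin D → ℝ) → ℝ} (hf : ∀ i ∈ s, Sm (f i))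
    (μ : Fin D) (x : Fin D → ℝ) :
    pd μ (fun y => ∑ i ∈ s, f i y) x = ∑ i ∈ s, pd μ (f i) x := by
  simp only [pd, fderiv_fun_sum fun i hi => (hf i hi).differentiable x, sum_apply]

lemma pd_const (c : ℝ) (μ : Fin D) (x : Fin D → ℝ) : pd μ (fun _ => c) x = 0 := by
  simp only [pd, fderiv_fun_const, Pi.zero_apply, zero_apply]

lemma pd_comm {f : (Fin D → ℝ) → ℝ} (hf : Sm f) (μ ν : Fin D) (x : Fin D → ℝ) :
    pd μ (fun y => pd ν f y) x = pd ν (fun y => pd μ f y) x := by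
  have hsymm : IsSymmSndFDerivAt ℝ f x := by
    apply hf.contDiffAt.isSymmSndFDerivAt
    rw [minSmoothness_of_isRCLikeNormedField]
    exact_mod_cast ENat.natCast_le_of_coe_top_le_withTop le_rfl 2
  have hd : DifferentiableAt ℝ (fderiv ℝ f) x := hf.contDiff_fderiv.differentiable (by simp) x
  have hsnd : ∀ v w, fderiv ℝ (fun y => fderiv ℝ f y v) x w = fderiv ℝ (fderiv ℝ f) x w v :=
    fun v w => by simp [fderiv_clm_apply hd (differentiableAt_const v)]
  simp only [pd, hsnd]
  exact hsymm.eq _ _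

end Calculus

lemma sum_sum_eq_zero_of_antisymm {R ι : Type*} [CommRing R] [NoZeroDivisors R] [CharZero R]
    {s : Finset ι} {F : ι → ι → R} (h : ∀ i j, F i j + F j i = 0) :
    ∑ i ∈ s, ∑ j ∈ s, F i j = 0 := by
  have hsum : 2 * ∑ i ∈ s, ∑ j ∈ s, F i j = ∑ i ∈ s, ∑ j ∈ s, (F i j + F j i) := by
    rw [two_mul]
    nth_rewrite 2 [Finset.sum_comm]
    simp only [← Finset.sum_add_distrib]
  simpa [h] using hsum

def lieBracket (ζ ξ : (Fin D → ℝ) → Fin D → ℝ) (x : Fin D → ℝ) (μ : Fin D) : ℝ :=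
  (∑ ν, ζ x ν * pd ν (fun y => ξ y μ) x) - ∑ ν, ξ x ν * pd ν (fun y => ζ y μ) x

def lieDerivCovector (ζ c : (Fin D → ℝ) → Fin D → ℝ) (x : Fin D → ℝ) (μ : Fin D) : ℝ :=
  (∑ ρ, ζ x ρ * pd ρ (fun y => c y μ) x) + ∑ ρ, pd μ (fun y => ζ y ρ) x * c x ρ

def exteriorDeriv (c : (Fin D → ℝ) → Fin D → ℝ) (x : Fin D → ℝ) (μ ν : Fin D) : ℝ :=
  pd μ (fun y => c y ν) x - pd ν (fun y => c y μ) x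

def contract (H : (Fin D → ℝ) → Fin D → Fin D → Fin D → ℝ) (V : (Fin D → ℝ) → Fin D → ℝ)
    (x : Fin D → ℝ) (μ ν : Fin D) : ℝ :=
  ∑ ρ, H x μ ν ρ * V x ρ

def contract₂ (H : (Fin D → ℝ) → Fin D → Fin D → Fin D → ℝ) (ζ ξ : (Fin D → ℝ) → Fin D → ℝ)
    (x : Fin D → ℝ) (μ : Fin D) : ℝ :=
  ∑ ν, ∑ ρ, H x μ ν ρ * ζ x ν * ξ x ρ

section Smoothness

variable {T : (Fin D → ℝ) → Fin D → Fin D → ℝ} {H : (Fin D → ℝ) → Fin D → Fin D → Fin D → ℝ}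
  {V w : (Fin D → ℝ) → Fin D → ℝ}

lemma smooth2T_lieG (hT : Smooth2T T) (hV : SmoothVF V) : Smooth2T fun y a b => lieG T V a b y :=
  fun μ ν => by
    unfold Smooth2T SmoothVF at *
    unfold lieG
    fun_prop

lemma smooth2T_exteriorDeriv (hw : SmoothVF w) : Smooth2T (exteriorDeriv w) := fun μ ν => by
  unfold SmoothVF at hw
  unfold exteriorDeriv
  fun_prop

lemma smoothVF_lieDerivCovector (hV : SmoothVF V) (hw : SmoothVF w) :
    SmoothVF (lieDerivCovector V w) := fun μ => by
  unfold SmoothVF at *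
  unfold lieDerivCovector
  fun_prop

lemma smooth2T_contract (hH : ∀ μ ν ρ, Sm fun x => H x μ ν ρ) (hV : SmoothVF V) :
    Smooth2T (contract H V) := fun μ ν => by
  unfold SmoothVF at hV
  unfold contract
  fun_prop

lemma smoothVF_contract₂ (hH : ∀ μ ν ρ, Sm fun x => H x μ ν ρ) (hV : SmoothVF V)
    (hw : SmoothVF w) : SmoothVF (contract₂ H V w) := fun μ => by
  unfold SmoothVF at *
  unfold contract₂
  fun_prop

end Smoothness

-- `lieG T ζ` is the Lie derivative `ℒ_ζ T` of any 2-tensor field `T`, not only of the metric.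
lemma lieG_add {S T : (Fin D → ℝ) → Fin D → Fin D → ℝ} (hS : Smooth2T S) (hT : Smooth2T T)
    (ζ : (Fin D → ℝ) → Fin D → ℝ) (μ ν : Fin D) (x : Fin D → ℝ) :
    lieG (fun y a b => S y a b + T y a b) ζ μ ν x = lieG S ζ μ ν x + lieG T ζ μ ν x := by
  unfold Smooth2T at *
  simp (disch := fun_prop) only [lieG, pd_add, mul_add, Finset.sum_add_distrib]
  ring

lemma lieG_of_forall_eq_zero {T : (Fin D → ℝ) → Fin D → Fin D → ℝ} (hT : ∀ y a b, T y a b = 0)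
    (ζ : (Fin D → ℝ) → Fin D → ℝ) (μ ν : Fin D) (x : Fin D → ℝ) : lieG T ζ μ ν x = 0 := by
  simp only [lieG, hT, pd_const, mul_zero, Finset.sum_const_zero, add_zero]

lemma exteriorDeriv_sub {v w : (Fin D → ℝ) → Fin D → ℝ} (hv : SmoothVF v) (hw : SmoothVF w)
    (x : Fin D → ℝ) (μ ν : Fin D) :
    exteriorDeriv (fun y a => v y a - w y a) x μ ν
      = exteriorDeriv v x μ ν - exteriorDeriv w x μ ν := by
  unfold exteriorDeriv
  rw [pd_sub (hv ν) (hw ν), pd_sub (hv μ) (hw μ)]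
  ring

lemma lieG_lieBracket {T : (Fin D → ℝ) → Fin D → Fin D → ℝ} {ζ ξ : (Fin D → ℝ) → Fin D → ℝ}
    (hT : Smooth2T T) (hζ : SmoothVF ζ) (hξ : SmoothVF ξ) (μ ν : Fin D) (x : Fin D → ℝ) :
    lieG T (lieBracket ζ ξ) μ ν x
      = lieG (fun y a b => lieG T ξ a b y) ζ μ ν x
        - lieG (fun y a b => lieG T ζ a b y) ξ μ ν x := by
  unfold SmoothVF Smooth2T at *
  simp (disch := fun_prop) only [lieG, lieBracket, pd_add, pd_sub, pd_mul, pd_sum]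
  rw [← sub_eq_zero]
  simp only [Finset.mul_sum, Finset.sum_mul, mul_add, sub_mul, add_mul,
    ← Finset.sum_sub_distrib, ← Finset.sum_add_distrib]
  refine sum_sum_eq_zero_of_antisymm fun ρ σ => ?_
  -- `pd_comm` is a permutation lemma, so `simp` uses it to order mixed partials canonically
  simp (disch := fun_prop) only [pd_comm]
  ring

lemma exteriorDeriv_lieDerivCovector {ζ c : (Fin D → ℝ) → Fin D → ℝ} (hζ : SmoothVF ζ)
    (hc : SmoothVF c) (μ ν : Fin D) (x : Fin D → ℝ) :
    exteriorDeriv (lieDerivCovector ζ c) x μ ν = lieG (exteriorDeriv c) ζ μ ν x := by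
  unfold SmoothVF at *
  simp (disch := fun_prop) only [lieG, lieDerivCovector, exteriorDeriv, pd_add, pd_sub, pd_mul,
    pd_sum]
  rw [← sub_eq_zero]
  simp only [mul_sub, ← Finset.sum_sub_distrib, ← Finset.sum_add_distrib]
  refine Finset.sum_eq_zero fun ρ _ => ?_
  simp (disch := fun_prop) only [pd_comm]
  ring

structure IsClosedThreeForm (H : (Fin D → ℝ) → Fin D → Fin D → Fin D → ℝ) : Prop where
  smooth : ∀ μ ν ρ, Sm fun x => H x μ ν ρ
  swap : ∀ x μ ν ρ, H x ν μ ρ = -H x μ ν ρ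
  cycle : ∀ x μ ν ρ, H x ν ρ μ = H x μ ν ρ
  closed : ∀ x μ ν ρ σ, pd μ (fun y => H y ν ρ σ) x - pd ν (fun y => H y μ ρ σ) x
    + pd ρ (fun y => H y μ ν σ) x - pd σ (fun y => H y μ ν ρ) x = 0

namespace IsClosedThreeForm

variable {H : (Fin D → ℝ) → Fin D → Fin D → Fin D → ℝ} (hH : IsClosedThreeForm H)
include hH

lemma swap₂₃ (x : Fin D → ℝ) (μ ν ρ : Fin D) : H x μ ρ ν = -H x μ ν ρ := by
  rw [hH.cycle x ν μ ρ, hH.swap]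

lemma pd_swap₂₃ (a μ ν ρ : Fin D) (x : Fin D → ℝ) :
    pd a (fun y => H y μ ρ ν) x = -pd a (fun y => H y μ ν ρ) x := by
  simp only [funext fun y => hH.swap₂₃ y μ ν ρ, pd_neg]

lemma contract_lieBracket {ζ ξ : (Fin D → ℝ) → Fin D → ℝ} (hζ : SmoothVF ζ) (hξ : SmoothVF ξ)
    (μ ν : Fin D) (x : Fin D → ℝ) :
    contract H (lieBracket ζ ξ) x μ ν - exteriorDeriv (contract₂ H ζ ξ) x μ ν
      = lieG (contract H ξ) ζ μ ν x - lieG (contract H ζ) ξ μ ν x := by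
  unfold SmoothVF at *
  have := hH.smooth
  simp (disch := fun_prop) only [lieG, lieBracket, contract, contract₂, exteriorDeriv, pd_mul,
    pd_sum]
  rw [← sub_eq_zero]
  simp only [Finset.mul_sum, mul_sub, mul_add, add_mul, ← Finset.sum_sub_distrib,
    ← Finset.sum_add_distrib]
  refine sum_sum_eq_zero_of_antisymm fun ρ σ => ?_
  rw [hH.swap₂₃ x ν ρ σ, hH.swap₂₃ x μ ρ σ, hH.swap x ν ρ σ, ← hH.cycle x σ ν ρ,
    hH.pd_swap₂₃ μ ν ρ σ, hH.pd_swap₂₃ ν μ ρ σ]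
  -- what is left is `dH` evaluated on `ζ ∧ ξ`
  linear_combination (ζ x σ * ξ x ρ - ζ x ρ * ξ x σ) * hH.closed x μ ν ρ σ

end IsClosedThreeForm

section Torsion

variable {B : (Fin D → ℝ) → Fin D → Fin D → ℝ}

def torsionForm (B : (Fin D → ℝ) → Fin D → Fin D → ℝ) :
    (Fin D → ℝ) → Fin D → Fin D → Fin D → ℝ :=
  fun x μ ν ρ => Htor B μ ν ρ x

lemma Htor_cycle (μ ν ρ : Fin D) (x : Fin D → ℝ) : Htor B ν ρ μ x = Htor B μ ν ρ x := by
  unfold Htor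
  ring

lemma Htor_swap (hBanti : ∀ x μ ν, B x μ ν = -B x ν μ) (μ ν ρ : Fin D) (x : Fin D → ℝ) :
    Htor B ν μ ρ x = -Htor B μ ν ρ x := by
  simp only [Htor, funext fun y => hBanti y μ ρ, funext fun y => hBanti y ρ ν,
    funext fun y => hBanti y ν μ, pd_neg]
  ring

lemma isClosedThreeForm_torsionForm (hBs : Smooth2T B)
    (hBanti : ∀ x μ ν, B x μ ν = -B x ν μ) : IsClosedThreeForm (torsionForm B) where
  smooth μ ν ρ := by
    unfold Smooth2T at hBs
    unfold torsionForm Htor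
    fun_prop
  swap x μ ν ρ := Htor_swap hBanti μ ν ρ x
  cycle x μ ν ρ := Htor_cycle μ ν ρ x
  closed x μ ν ρ σ := by
    unfold Smooth2T at hBs
    simp (disch := fun_prop) only [torsionForm, Htor, funext fun y => hBanti y ν σ,
      funext fun y => hBanti y ρ μ, pd_neg, pd_add]
    simp (disch := fun_prop) only [pd_comm]
    ring

lemma Dm_add_Dp {G : (Fin D → ℝ) → Fin D → Fin D → ℝ} (hGsym : ∀ x μ ν, G x μ ν = G x ν μ)
    (hBanti : ∀ x μ ν, B x μ ν = -B x ν μ) (V : (Fin D → ℝ) → Fin D → ℝ) (μ ν : Fin D)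
    (x : Fin D → ℝ) :
    Dm G B V μ ν x + Dp G B V ν μ x = lieG G V μ ν x + contract (torsionForm B) V x μ ν := by
  have pd_G_symm (a b c : Fin D) : pd a (fun y => G y b c) x = pd a (fun y => G y c b) x := by
    simp only [funext fun y => hGsym y b c]
  simp only [Dm, Dp, GamM, GamP, Gam, lieG, contract, torsionForm, ← Finset.sum_add_distrib]
  refine Finset.sum_congr rfl fun ρ _ => ?_
  rw [Htor_cycle ν μ ρ, Htor_swap hBanti μ ν ρ, Htor_cycle μ ν ρ]
  simp only [pd_G_symm _ ρ, pd_G_symm _ ν μ, hGsym x ρ]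
  ring

end Torsion

def killingTensor (G : (Fin D → ℝ) → Fin D → Fin D → ℝ)
    (H : (Fin D → ℝ) → Fin D → Fin D → Fin D → ℝ) (ζ b : (Fin D → ℝ) → Fin D → ℝ)
    (x : Fin D → ℝ) (μ ν : Fin D) : ℝ :=
  lieG G ζ μ ν x + contract H ζ x μ ν + exteriorDeriv b x μ ν

lemma isKillingPair_iff {G B : (Fin D → ℝ) → Fin D → Fin D → ℝ}
    (hGsym : ∀ x μ ν, G x μ ν = G x ν μ) (hBanti : ∀ x μ ν, B x μ ν = -B x ν μ)
    (ζ b : (Fin D → ℝ) → Fin D → ℝ) :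
    IsKillingPair G B ζ b ↔ ∀ x μ ν, killingTensor G (torsionForm B) ζ b x μ ν = 0 := by
  simp only [IsKillingPair, killingTensor, exteriorDeriv, Dm_add_Dp hGsym hBanti, add_sub_assoc]
  exact ⟨fun h x μ ν => h μ ν x, fun h μ ν x => h x μ ν⟩

lemma lieG_killingTensor {G : (Fin D → ℝ) → Fin D → Fin D → ℝ}
    {H : (Fin D → ℝ) → Fin D → Fin D → Fin D → ℝ} (hG : Smooth2T G) (hH : IsClosedThreeForm H)
    {V w : (Fin D → ℝ) → Fin D → ℝ} (hV : SmoothVF V) (hw : SmoothVF w)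
    (ζ : (Fin D → ℝ) → Fin D → ℝ) (μ ν : Fin D) (x : Fin D → ℝ) :
    lieG (killingTensor G H V w) ζ μ ν x
      = lieG (fun y a b => lieG G V a b y) ζ μ ν x + lieG (contract H V) ζ μ ν x
        + lieG (exteriorDeriv w) ζ μ ν x := by
  have hLV := smooth2T_lieG hG hV
  have hHV := smooth2T_contract hH.smooth hV
  change lieG (fun y a b => lieG G V a b y + contract H V y a b + exteriorDeriv w y a b) ζ μ ν x
    = _
  rw [lieG_add (fun a b => (hLV a b).add (hHV a b)) (smooth2T_exteriorDeriv hw),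
    lieG_add hLV hHV]

lemma killingTensor_lieBracket {G : (Fin D → ℝ) → Fin D → Fin D → ℝ}
    {H : (Fin D → ℝ) → Fin D → Fin D → Fin D → ℝ} (hG : Smooth2T G) (hH : IsClosedThreeForm H)
    {ζ b ξ c : (Fin D → ℝ) → Fin D → ℝ} (hζ : SmoothVF ζ) (hb : SmoothVF b) (hξ : SmoothVF ξ)
    (hc : SmoothVF c) (x : Fin D → ℝ) (μ ν : Fin D) :
    killingTensor G H (lieBracket ζ ξ)
        (fun y a => lieDerivCovector ζ c y a - lieDerivCovector ξ b y a - contract₂ H ζ ξ y a) x μ ν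
      = lieG (killingTensor G H ξ c) ζ μ ν x - lieG (killingTensor G H ζ b) ξ μ ν x := by
  have hζc := smoothVF_lieDerivCovector hζ hc
  have hξb := smoothVF_lieDerivCovector hξ hb
  rw [killingTensor,
    exteriorDeriv_sub (fun a => (hζc a).sub (hξb a)) (smoothVF_contract₂ hH.smooth hζ hξ),
    exteriorDeriv_sub hζc hξb, lieG_killingTensor hG hH hξ hc, lieG_killingTensor hG hH hζ hb,
    lieG_lieBracket hG hζ hξ, exteriorDeriv_lieDerivCovector hζ hc,
    exteriorDeriv_lieDerivCovector hξ hb]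
  linear_combination hH.contract_lieBracket hζ hξ μ ν x

theorem stmt7_general {D : ℕ}
    (G B : (Fin D → ℝ) → Fin D → Fin D → ℝ)
    (hGs : Smooth2T G) (hGsym : ∀ x μ ν, G x μ ν = G x ν μ)
    (hBs : Smooth2T B) (hBanti : ∀ x μ ν, B x μ ν = -B x ν μ)
    (ζ b ξ c : (Fin D → ℝ) → Fin D → ℝ)
    (hζ : SmoothVF ζ) (hb : SmoothVF b) (hξ : SmoothVF ξ) (hc : SmoothVF c)
    (hζb : IsKillingPair G B ζ b) (hξc : IsKillingPair G B ξ c) :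
    IsKillingPair G B
      (fun x μ => (∑ ν, ζ x ν * pd ν (fun y => ξ y μ) x)
        - ∑ ν, ξ x ν * pd ν (fun y => ζ y μ) x)
      (fun x μ =>
        ((∑ ρ, ζ x ρ * pd ρ (fun y => c y μ) x) + ∑ ρ, pd μ (fun y => ζ y ρ) x * c x ρ)
        - ((∑ ρ, ξ x ρ * pd ρ (fun y => b y μ) x) + ∑ ρ, pd μ (fun y => ξ y ρ) x * b x ρ)
        - ∑ ν, ∑ ρ, Htor B μ ν ρ x * ζ x ν * ξ x ρ) := by
  rw [isKillingPair_iff hGsym hBanti] at hζb hξc ⊢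
  intro x μ ν
  have h := killingTensor_lieBracket hGs (isClosedThreeForm_torsionForm hBs hBanti) hζ hb hξ hc
    x μ ν
  rwa [lieG_of_forall_eq_zero hξc, lieG_of_forall_eq_zero hζb, sub_zero] at h

/-- The Lie bracket of two Killing pairs is again a Killing pair, with
`e_μ = (ℒ_ζ c)_μ − (ℒ_ξ b)_μ − H_{μνρ}ζ^νξ^ρ`. -/
theorem stmt7 {D : ℕ} (hD : 1 ≤ D)
    (G B : (Fin D → ℝ) → Fin D → Fin D → ℝ)
    (hGs : Smooth2T G) (hGsym : ∀ x μ ν, G x μ ν = G x ν μ)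
    (hBs : Smooth2T B) (hBanti : ∀ x μ ν, B x μ ν = -B x ν μ)
    (ζ b ξ c : (Fin D → ℝ) → Fin D → ℝ)
    (hζ : SmoothVF ζ) (hb : SmoothVF b) (hξ : SmoothVF ξ) (hc : SmoothVF c)
    (hζb : IsKillingPair G B ζ b) (hξc : IsKillingPair G B ξ c) :
    IsKillingPair G B
      (fun x μ => (∑ ν, ζ x ν * pd ν (fun y => ξ y μ) x)
        - ∑ ν, ξ x ν * pd ν (fun y => ζ y μ) x)
      (fun x μ =>
        ((∑ ρ, ζ x ρ * pd ρ (fun y => c y μ) x) + ∑ ρ, pd μ (fun y => ζ y ρ) x * c x ρ)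
        - ((∑ ρ, ξ x ρ * pd ρ (fun y => b y μ) x) + ∑ ρ, pd μ (fun y => ξ y ρ) x * b x ρ)
        - ∑ ν, ∑ ρ, Htor B μ ν ρ x * ζ x ν * ξ x ρ) :=
  stmt7_general G B hGs hGsym hBs hBanti ζ b ξ c hζ hb hξ hc hζb hξc
end
end
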